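/- arXiv:0805.1859 — 2 statements merged into one kernel-verified Lean document; each statement's English description precedes it below -/
import Mathlib

section
/- For every phylogenetic network N and every three distinct leaves x, y, z of N, at least one of the triplets xy|z, xz|y, yz|x is consistent with N; consequently, the triplet set T(N) is dense, and in particular every reflective triplet set is dense. -/
/-!
Common definitions for formalizing "Constructing the Simplest Possible
Phylogenetic Network from Triplets" (van Iersel, Kelk).

A directed graph on a vertex type `V` is given by its arc set `A : Set (V × V)`.
-/

namespace Phylo

variable {V L : Type}

/-- In-degree of a vertex. -/
noncomputable def indeg (A : Set (V × V)) (v : V) : ℕ := {u | (u, v) ∈ A}.ncard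

/-- Out-degree of a vertex. -/
noncomputable def outdeg (A : Set (V × V)) (v : V) : ℕ := {w | (v, w) ∈ A}.ncard

/-- The root: indegree 0 and outdegree 2. -/
def IsRoot (A : Set (V × V)) (v : V) : Prop := indeg A v = 0 ∧ outdeg A v = 2

/-- A split vertex: indegree 1 and outdegree 2. -/
def IsSplit (A : Set (V × V)) (v : V) : Prop := indeg A v = 1 ∧ outdeg A v = 2

/-- A reticulation vertex: indegree 2 and outdegree 1. -/
def IsRetic (A : Set (V × V)) (v : V) : Prop := indeg A v = 2 ∧ outdeg A v = 1

/-- A leaf vertex: indegree 1 and outdegree 0. -/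
def IsLeafV (A : Set (V × V)) (v : V) : Prop := indeg A v = 1 ∧ outdeg A v = 0

/-- Directed reachability (reflexive-transitive closure of the arc relation). -/
def Reaches (A : Set (V × V)) : V → V → Prop :=
  Relation.ReflTransGen fun u v => (u, v) ∈ A

/-- A directed graph is acyclic if it has no directed cycle. -/
def Acyclic (A : Set (V × V)) : Prop := ∀ u v, (u, v) ∈ A → ¬ Reaches A v u

/-- Adjacency in the underlying undirected graph. -/
def UAdj (A : Set (V × V)) (u v : V) : Prop := (u, v) ∈ A ∨ (v, u) ∈ A

/-- The underlying undirected graph is connected (on all of `V`). -/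
def ConnectedGraph (A : Set (V × V)) : Prop :=
  ∀ u v : V, Relation.ReflTransGen (UAdj A) u v

/-- Undirected connectivity within a set `S` of vertices (in the induced subgraph). -/
def ConnWithin (A : Set (V × V)) (S : Set V) : Prop :=
  ∀ u ∈ S, ∀ v ∈ S, Relation.ReflTransGen (fun a b => a ∈ S ∧ b ∈ S ∧ UAdj A a b) u v

/-- A set of at least two vertices inducing a biconnected subgraph: it is connected
and stays connected after removal of any single vertex. -/
def Biconnected (A : Set (V × V)) (S : Set V) : Prop :=
  2 ≤ S.ncard ∧ ConnWithin A S ∧ ∀ w ∈ S, ConnWithin A (S \ {w})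

/-- A biconnected component: a maximal biconnected subgraph. -/
def BiconnComp (A : Set (V × V)) (S : Set V) : Prop :=
  Biconnected A S ∧ ∀ S', Biconnected A S' → S ⊆ S' → S' = S

/-- The arcs leaving a set of vertices. -/
def outArcs (A : Set (V × V)) (S : Set V) : Set (V × V) :=
  {a ∈ A | a.1 ∈ S ∧ a.2 ∉ S}

/-- A phylogenetic network on the (finite) vertex type `V` with leaves labelled by
elements of `L`: a directed acyclic graph with exactly one vertex of indegree 0
and outdegree 2 (the root), all other vertices being split vertices, reticulation
vertices or leaves; leaves are distinctly labelled.  Moreover (to avoid redundant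
networks) every nontrivial biconnected component has at least three outgoing arcs. -/
structure PhyloNetwork (V L : Type) : Type where
  vfin : Finite V
  arcs : Set (V × V)
  lab : V → L
  acyclic : Acyclic arcs
  root_ex : ∃ r, IsRoot arcs r
  root_unique : ∀ r r', IsRoot arcs r → IsRoot arcs r' → r = r'
  vertex_type : ∀ v, IsRoot arcs v ∨ IsSplit arcs v ∨ IsRetic arcs v ∨ IsLeafV arcs v
  lab_inj : ∀ u v, IsLeafV arcs u → IsLeafV arcs v → lab u = lab v → u = v
  bicomp_out : ∀ S, BiconnComp arcs S → S.ncard ≠ 2 → 3 ≤ (outArcs arcs S).ncard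

/-- The set of leaf labels of a network. -/
def leafSet (N : PhyloNetwork V L) : Set L := {x | ∃ v, IsLeafV N.arcs v ∧ N.lab v = x}

/-- A directed path, as a nonempty list of distinct vertices consecutively joined by arcs. -/
def IsPath (A : Set (V × V)) (l : List V) : Prop :=
  l ≠ [] ∧ l.Nodup ∧ l.Chain' fun a b => (a, b) ∈ A

/-- A directed path from `u` to `v`. -/
def IsPathFromTo (A : Set (V × V)) (l : List V) (u v : V) : Prop :=
  IsPath A l ∧ l.head? = some u ∧ l.getLast? = some v

/-- `w` is an endpoint of the path `l`. -/
def IsEndpoint (l : List V) (w : V) : Prop := l.head? = some w ∨ l.getLast? = some w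

/-- Two paths are internally vertex-disjoint: any common vertex is an endpoint of both. -/
def IntDisjoint (p q : List V) : Prop :=
  ∀ w, w ∈ p → w ∈ q → IsEndpoint p w ∧ IsEndpoint q w

/-- An embedding of the triplet `xy|z` with summit `p` and cherry vertex `q`:
pairwise internally vertex-disjoint directed paths `q→x`, `q→y`, `p→q`, `p→z`. -/
def HasEmbedding (A : Set (V × V)) (p q x y z : V) : Prop :=
  p ≠ q ∧ ∃ Pqx Pqy Ppq Ppz : List V,
    IsPathFromTo A Pqx q x ∧ IsPathFromTo A Pqy q y ∧
    IsPathFromTo A Ppq p q ∧ IsPathFromTo A Ppz p z ∧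
    IntDisjoint Pqx Pqy ∧ IntDisjoint Pqx Ppq ∧ IntDisjoint Pqx Ppz ∧
    IntDisjoint Pqy Ppq ∧ IntDisjoint Pqy Ppz ∧ IntDisjoint Ppq Ppz

/-- The triplet `xy|z` (on leaf labels) is consistent with the network `N`. -/
def ConsistentT (N : PhyloNetwork V L) (x y z : L) : Prop :=
  ∃ a b c : V, IsLeafV N.arcs a ∧ IsLeafV N.arcs b ∧ IsLeafV N.arcs c ∧
    N.lab a = x ∧ N.lab b = y ∧ N.lab c = z ∧ a ≠ b ∧ a ≠ c ∧ b ≠ c ∧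
    ∃ p q, HasEmbedding N.arcs p q a b c

/-- `T(N)`: the set of all triplets consistent with `N`
(the triple `(x,y,z)` codes the triplet `xy|z`). -/
def TN (N : PhyloNetwork V L) : Set (L × L × L) := {t | ConsistentT N t.1 t.2.1 t.2.2}

/-- `N` is consistent with every triplet in `T`. -/
def ConsistentSet (N : PhyloNetwork V L) (T : Set (L × L × L)) : Prop :=
  ∀ t ∈ T, ConsistentT N t.1 t.2.1 t.2.2

/-- `N` reflects `T` if `T(N) = T`. -/
def Reflects (N : PhyloNetwork V L) (T : Set (L × L × L)) : Prop := TN N = T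

/-- `L(T)`: the set of leaves occurring in a triplet set. -/
def tripletLeaves (T : Set (L × L × L)) : Set L :=
  {x | ∃ t ∈ T, x = t.1 ∨ x = t.2.1 ∨ x = t.2.2}

/-- `T` is a well-formed triplet set: in each triplet the three leaves are distinct, and
the coding is invariant under swapping the first two coordinates (`xy|z = yx|z`). -/
def IsTripletSet (T : Set (L × L × L)) : Prop :=
  ∀ t ∈ T, (t.2.1, t.1, t.2.2) ∈ T ∧ t.1 ≠ t.2.1 ∧ t.1 ≠ t.2.2 ∧ t.2.1 ≠ t.2.2

/-- `T` is dense: for any three distinct leaves at least one triplet on them is present. -/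
def DenseT (T : Set (L × L × L)) : Prop :=
  ∀ x ∈ tripletLeaves T, ∀ y ∈ tripletLeaves T, ∀ z ∈ tripletLeaves T,
    x ≠ y → x ≠ z → y ≠ z → (x, y, z) ∈ T ∨ (x, z, y) ∈ T ∨ (y, z, x) ∈ T

/-- `S` is an SN-set of `T` with respect to the leaf set `U`: `S ⊆ U` and there is
no triplet `xy|z ∈ T` with `x, z ∈ S` and `y ∉ S`. -/
def SNSetOn (T : Set (L × L × L)) (U S : Set L) : Prop :=
  S ⊆ U ∧ ¬ ∃ x y z, (x, y, z) ∈ T ∧ x ∈ S ∧ z ∈ S ∧ y ∉ S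

/-- `S` is an SN-set of `T`. -/
def SNSet (T : Set (L × L × L)) (S : Set L) : Prop := SNSetOn T (tripletLeaves T) S

/-- `S` is a maximal SN-set: a nontrivial SN-set not strictly contained
in any nontrivial SN-set. -/
def MaxSNSet (T : Set (L × L × L)) (S : Set L) : Prop :=
  SNSet T S ∧ S ≠ tripletLeaves T ∧
    ∀ S', SNSet T S' → S' ≠ tripletLeaves T → S ⊆ S' → S' = S

/-- `S` is an SN-set maximal under the restriction of not containing `B`. -/
def MaxSNAvoid (T : Set (L × L × L)) (B S : Set L) : Prop :=
  SNSet T S ∧ ¬ B ⊆ S ∧ ∀ S', SNSet T S' → ¬ B ⊆ S' → S ⊆ S' → S' = S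

/-- `T|S`: the triplets of `T` all of whose leaves lie in `S`. -/
def restrictT (T : Set (L × L × L)) (S : Set L) : Set (L × L × L) :=
  {t ∈ T | t.1 ∈ S ∧ t.2.1 ∈ S ∧ t.2.2 ∈ S}

/-- A cut-arc: an arc whose removal disconnects the underlying undirected graph. -/
def CutArc (A : Set (V × V)) (a : V × V) : Prop :=
  a ∈ A ∧ ¬ ConnectedGraph (A \ {a})

/-- A simple network: it contains a reticulation vertex and all its cut-arcs are
trivial (i.e. end in a leaf). -/
def SimpleNet (N : PhyloNetwork V L) : Prop :=
  (∃ v, IsRetic N.arcs v) ∧ ∀ a, CutArc N.arcs a → IsLeafV N.arcs a.2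

/-- A level-`k` network: every biconnected component contains at most `k`
reticulation vertices. -/
def IsLevel (N : PhyloNetwork V L) (k : ℕ) : Prop :=
  ∀ S, BiconnComp N.arcs S → {v ∈ S | IsRetic N.arcs v}.ncard ≤ k

/-- The total number of reticulation vertices of a network. -/
noncomputable def numRetic (N : PhyloNetwork V L) : ℕ := {v | IsRetic N.arcs v}.ncard

/-- The level of a network: the smallest `k` such that it is a level-`k` network. -/
noncomputable def netLevel (N : PhyloNetwork V L) : ℕ := sInf {k | IsLevel N k}

/-- A highest cut-arc: a cut-arc not reachable from any other cut-arc. -/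
def HighestCutArc (A : Set (V × V)) (a : V × V) : Prop :=
  CutArc A a ∧ ∀ b, CutArc A b → b ≠ a → ¬ Reaches A b.2 a.1

/-- The set of leaf labels below a vertex `v`. -/
def leavesBelowV (N : PhyloNetwork V L) (v : V) : Set L :=
  {x | ∃ w, IsLeafV N.arcs w ∧ Reaches N.arcs v w ∧ N.lab w = x}

/-- An (undirected) cycle in the underlying undirected graph, as a list of at least
three distinct vertices that are consecutively adjacent, the last being adjacent
to the first. -/
def IsUCycle (A : Set (V × V)) (l : List V) : Prop :=
  3 ≤ l.length ∧ l.Nodup ∧ l.Chain' (UAdj A) ∧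
    ∃ u w, l.head? = some u ∧ l.getLast? = some w ∧ UAdj A w u

/-- A highest reticulation: a reticulation lying on a cycle through the root. -/
def HighestRetic (N : PhyloNetwork V L) (r : V) : Prop :=
  IsRetic N.arcs r ∧
    ∃ c, IsUCycle N.arcs c ∧ r ∈ c ∧ ∃ rt, IsRoot N.arcs rt ∧ rt ∈ c

/-- `BHR(N)`: the set of leaves below a highest reticulation. -/
def BHR (N : PhyloNetwork V L) : Set L :=
  {x | ∃ r, HighestRetic N r ∧ x ∈ leavesBelowV N r}

/-- The collection of sets of leaves below the highest cut-arcs of `N`. -/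
def highCutArcLeafSets (N : PhyloNetwork V L) : Set (Set L) :=
  {S | ∃ a, HighestCutArc N.arcs a ∧ S = leavesBelowV N a.2}

/-- `CutInduce(N,T)`: the induced triplet set on the sets of leaves below the
highest cut-arcs of `N`. -/
def CutInduce (N : PhyloNetwork V L) (T : Set (L × L × L)) :
    Set (Set L × Set L × Set L) :=
  {t | t.1 ∈ highCutArcLeafSets N ∧ t.2.1 ∈ highCutArcLeafSets N ∧
       t.2.2 ∈ highCutArcLeafSets N ∧
       t.1 ≠ t.2.1 ∧ t.1 ≠ t.2.2 ∧ t.2.1 ≠ t.2.2 ∧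
       ∃ x ∈ t.1, ∃ y ∈ t.2.1, ∃ z ∈ t.2.2, (x, y, z) ∈ T}

/-- `T ∇ C`: the triplet set induced by a collection `C` of leaf sets. -/
def TInduced (T : Set (L × L × L)) (C : Set (Set L)) : Set (Set L × Set L × Set L) :=
  {t | t.1 ∈ C ∧ t.2.1 ∈ C ∧ t.2.2 ∈ C ∧
       t.1 ≠ t.2.1 ∧ t.1 ≠ t.2.2 ∧ t.2.1 ≠ t.2.2 ∧
       ∃ x ∈ t.1, ∃ y ∈ t.2.1, ∃ z ∈ t.2.2, (x, y, z) ∈ T}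

/-- A label-preserving isomorphism of networks. -/
def NetIso {V₁ V₂ L : Type} (N₁ : PhyloNetwork V₁ L) (N₂ : PhyloNetwork V₂ L) : Prop :=
  ∃ e : V₁ ≃ V₂, (∀ u v : V₁, (u, v) ∈ N₁.arcs ↔ (e u, e v) ∈ N₂.arcs) ∧
    ∀ v, IsLeafV N₁.arcs v → N₂.lab (e v) = N₁.lab v

/-- A (rooted, binary) phylogenetic tree given by its arc set: acyclic, a unique
vertex of indegree 0, every vertex of indegree at most 1 and outdegree 0 or 2.
(The single-vertex tree is allowed.) -/
def IsTreeArcs (A : Set (V × V)) : Prop :=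
  Acyclic A ∧ (∃! r, indeg A r = 0) ∧ (∀ v, indeg A v ≤ 1) ∧
    ∀ v, outdeg A v = 0 ∨ outdeg A v = 2

/-- The leaf labels of a tree (leaves are the vertices of outdegree 0). -/
def treeLeafSet (A : Set (V × V)) (lab : V → L) : Set L :=
  {x | ∃ v, outdeg A v = 0 ∧ lab v = x}

/-- The triplet `xy|z` is consistent with the tree given by `A` and labelling `lab`. -/
def TreeConsistentTriplet (A : Set (V × V)) (lab : V → L) (x y z : L) : Prop :=
  ∃ a b c : V, outdeg A a = 0 ∧ outdeg A b = 0 ∧ outdeg A c = 0 ∧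
    lab a = x ∧ lab b = y ∧ lab c = z ∧ a ≠ b ∧ a ≠ c ∧ b ≠ c ∧
    ∃ p q, HasEmbedding A p q a b c

/-- A CandidateTBR SN-set: an SN-set `S` of `T` such that `T|S` is consistent with
some phylogenetic tree on the leaf set `S`. -/
def CandidateTBR (T : Set (L × L × L)) (S : Set L) : Prop :=
  SNSet T S ∧ ∃ (V : Type) (_ : Finite V) (A : Set (V × V)) (lab : V → L),
    IsTreeArcs A ∧
    (∀ u v, outdeg A u = 0 → outdeg A v = 0 → lab u = lab v → u = v) ∧
    treeLeafSet A lab = S ∧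
    ∀ t ∈ restrictT T S, TreeConsistentTriplet A lab t.1 t.2.1 t.2.2

/-- `S'` is an SN-set of `T|S` (with leaf set `S`) that is maximal under the
restriction of being a nontrivial (proper) subset of `S`. -/
def MaxProperSN (T : Set (L × L × L)) (S S' : Set L) : Prop :=
  SNSetOn (restrictT T S) S S' ∧ S' ≠ S ∧
    ∀ S'', SNSetOn (restrictT T S) S S'' → S'' ≠ S → S' ⊆ S'' → S'' = S'

/-!
Take a lowest vertex `q` reaching two of the three leaves, say `a` and `b`. It cannot reach all
three, since one of its at most two children would then reach two of them. Take next a lowest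
vertex `p` reaching both `q` and `c`. Paths `q → a`, `q → b`, `p → q`, `p → c` are then
internally vertex-disjoint: a vertex shared by the first two would be a lower choice of `q`, one
shared by the last two a lower choice of `p`, one shared by `p → q` and a path out of `q` would
close a cycle, and one shared by `p → c` and a path out of `q` would let `q` reach `c`.
-/

section Digraph

variable {V : Type} {A : Set (V × V)}

def ReachesTwoOf (A : Set (V × V)) (a b c v : V) : Prop :=
  Reaches A v a ∧ Reaches A v b ∨ Reaches A v a ∧ Reaches A v c ∨ Reaches A v b ∧ Reaches A v c

lemma IsPathFromTo.isEndpoint_head {l : List V} {u v : V} (h : IsPathFromTo A l u v) :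
    IsEndpoint l u :=
  Or.inl h.2.1

lemma IsPathFromTo.isEndpoint_last {l : List V} {u v : V} (h : IsPathFromTo A l u v) :
    IsEndpoint l v :=
  Or.inr h.2.2

lemma IsPathFromTo.reaches_of_mem {l : List V} {u v w : V} (h : IsPathFromTo A l u v)
    (hw : w ∈ l) : Reaches A u w ∧ Reaches A w v := by
  obtain ⟨⟨-, -, hchain⟩, hu, hv⟩ := h
  refine ⟨hchain.induction (Reaches A u) l (fun _ _ hxy hx => hx.tail hxy) ?_ w hw,
    hchain.backwards_induction (Reaches A · v) l (fun _ _ hxy hy => hy.head hxy) ?_ w hw⟩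
  · exact fun hne => (List.head_eq_iff_head?_eq_some hne).2 hu ▸ .refl
  · exact fun hne => List.getLast_of_mem_getLast? hv ▸ .refl

lemma intDisjoint_of_forall_mem_eq {p q : List V} {v : V} (hp : IsEndpoint p v)
    (hq : IsEndpoint q v) (h : ∀ w ∈ p, w ∈ q → w = v) : IntDisjoint p q := by
  intro w hwp hwq
  obtain rfl := h w hwp hwq
  exact ⟨hp, hq⟩

lemma intDisjoint_of_forall_notMem {p q : List V} (h : ∀ w ∈ p, w ∉ q) : IntDisjoint p q :=
  fun w hwp hwq => absurd hwq (h w hwp)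

lemma eq_of_reaches_of_outdeg_eq_zero [Finite V] {v w : V} (hv : outdeg A v = 0)
    (h : Reaches A v w) : w = v := by
  rcases h.cases_head with rfl | ⟨s, hs, -⟩
  · rfl
  · have hs' : s ∈ {w | (v, w) ∈ A} := hs
    rw [(Set.ncard_eq_zero).1 hv] at hs'
    exact hs'.elim

lemma Acyclic.reaches_antisymm (hA : Acyclic A) {u v : V} (huv : Reaches A u v)
    (hvu : Reaches A v u) : u = v := by
  rcases huv.cases_head with rfl | ⟨s, hs, hsv⟩
  · rfl
  · exact absurd (hsv.trans hvu) (hA u s hs)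

lemma Acyclic.not_transGen_self (hA : Acyclic A) (v : V) :
    ¬ Relation.TransGen (fun x y => (x, y) ∈ A) v v := fun h => by
  obtain ⟨s, hs, hsv⟩ := Relation.TransGen.head'_iff.1 h
  exact hA v s hs hsv

lemma Acyclic.exists_lowest [Finite V] (hA : Acyclic A) {P : V → Prop} (h : ∃ v, P v) :
    ∃ v, P v ∧ ∀ w, Reaches A v w → P w → w = v := by
  let below : V → V → Prop := fun w v => Relation.TransGen (fun x y => (x, y) ∈ A) v w
  have : IsTrans V below := ⟨fun _ _ _ h₁ h₂ => h₂.trans h₁⟩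
  have : Std.Irrefl below := ⟨hA.not_transGen_self⟩
  obtain ⟨v, hv, hmin⟩ := (Finite.wellFounded_of_trans_of_irrefl below).has_min {v | P v} h
  refine ⟨v, hv, fun w hvw hw => by_contra fun hne => hmin w hw ?_⟩
  exact (Relation.reflTransGen_iff_eq_or_transGen.1 hvw).resolve_left hne

lemma Acyclic.exists_highest [Finite V] (hA : Acyclic A) {P : V → Prop} (h : ∃ v, P v) :
    ∃ v, P v ∧ ∀ w, Reaches A w v → P w → w = v := by
  let above : V → V → Prop := Relation.TransGen (fun x y => (x, y) ∈ A)
  have : IsTrans V above := ⟨fun _ _ _ h₁ h₂ => h₁.trans h₂⟩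
  have : Std.Irrefl above := ⟨hA.not_transGen_self⟩
  obtain ⟨v, hv, hmin⟩ := (Finite.wellFounded_of_trans_of_irrefl above).has_min {v | P v} h
  refine ⟨v, hv, fun w hwv hw => by_contra fun hne => hmin w hw ?_⟩
  exact (Relation.reflTransGen_iff_eq_or_transGen.1 hwv).resolve_left (Ne.symm hne)

lemma Acyclic.exists_path (hA : Acyclic A) {u v : V} (h : Reaches A u v) :
    ∃ l, IsPathFromTo A l u v := by
  induction h using Relation.ReflTransGen.head_induction_on with
  | refl => exact ⟨[v], ⟨List.cons_ne_nil _ _, List.nodup_singleton _, List.isChain_singleton _⟩,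
      rfl, rfl⟩
  | @head x s hxs _ ih =>
    obtain ⟨l, hl⟩ := ih
    have hx : x ∉ l := fun hx => hA x s hxs (hl.reaches_of_mem hx).1
    obtain ⟨⟨-, hnodup, hchain⟩, hs, hlast⟩ := hl
    obtain ⟨tl, rfl⟩ : ∃ tl, l = s :: tl := by
      cases l with
      | nil => cases hs
      | cons s' tl => exact ⟨tl, by cases hs; rfl⟩
    exact ⟨x :: s :: tl, ⟨List.cons_ne_nil _ _, List.nodup_cons.2 ⟨hx, hnodup⟩,
      List.isChain_cons_cons.2 ⟨hxs, hchain⟩⟩, rfl, by rwa [List.getLast?_cons_cons]⟩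

lemma eq_or_eq_or_eq_of_ncard_le_two {α : Type*} {s : Set α} (hs : s.Finite) (h : s.ncard ≤ 2)
    {x y z : α} (hx : x ∈ s) (hy : y ∈ s) (hz : z ∈ s) : x = y ∨ x = z ∨ y = z := by
  by_contra! hne
  obtain ⟨hxy, hxz, hyz⟩ := hne
  have h3 : ({x, y, z} : Set α).ncard = 3 := Set.ncard_eq_three.2 ⟨x, y, z, hxy, hxz, hyz, rfl⟩
  have := Set.ncard_le_ncard (Set.insert_subset hx (Set.insert_subset hy
    (Set.singleton_subset_iff.2 hz))) hs
  omega

lemma exists_child_reachesTwoOf [Finite V] {q a b c : V} (hq : outdeg A q ≤ 2)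
    (hqa : Reaches A q a) (hqb : Reaches A q b) (hqc : Reaches A q c)
    (hna : q ≠ a) (hnb : q ≠ b) (hnc : q ≠ c) :
    ∃ u, (q, u) ∈ A ∧ ReachesTwoOf A a b c u := by
  obtain ⟨ua, hua, hua'⟩ := hqa.cases_head.resolve_left hna
  obtain ⟨ub, hub, hub'⟩ := hqb.cases_head.resolve_left hnb
  obtain ⟨uc, huc, huc'⟩ := hqc.cases_head.resolve_left hnc
  rcases eq_or_eq_or_eq_of_ncard_le_two (Set.toFinite _) hq hua hub huc with rfl | rfl | rfl
  · exact ⟨ua, hua, Or.inl ⟨hua', hub'⟩⟩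
  · exact ⟨ua, hua, Or.inr (Or.inl ⟨hua', huc'⟩)⟩
  · exact ⟨ub, hub, Or.inr (Or.inr ⟨hub', huc'⟩)⟩

theorem Acyclic.exists_hasEmbedding [Finite V] (hA : Acyclic A) {q a b c : V}
    (hqa : Reaches A q a) (hqb : Reaches A q b) (hqc : ¬ Reaches A q c)
    (hlow : ∀ w, Reaches A q w → Reaches A w a → Reaches A w b → w = q)
    (hanc : ∃ r, Reaches A r q ∧ Reaches A r c) : ∃ p, HasEmbedding A p q a b c := by
  obtain ⟨p, ⟨hpq, hpc⟩, hplow⟩ := hA.exists_lowest hanc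
  obtain ⟨Pqa, hPqa⟩ := hA.exists_path hqa
  obtain ⟨Pqb, hPqb⟩ := hA.exists_path hqb
  obtain ⟨Ppq, hPpq⟩ := hA.exists_path hpq
  obtain ⟨Ppc, hPpc⟩ := hA.exists_path hpc
  have out_q_pq {P : List V} {x : V} (hP : IsPathFromTo A P q x) : IntDisjoint P Ppq :=
    intDisjoint_of_forall_mem_eq hP.isEndpoint_head hPpq.isEndpoint_last fun w h₁ h₂ =>
      (hA.reaches_antisymm (hP.reaches_of_mem h₁).1 (hPpq.reaches_of_mem h₂).2).symm
  have out_q_pc {P : List V} {x : V} (hP : IsPathFromTo A P q x) : IntDisjoint P Ppc :=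
    intDisjoint_of_forall_notMem fun w h₁ h₂ =>
      hqc ((hP.reaches_of_mem h₁).1.trans (hPpc.reaches_of_mem h₂).2)
  refine ⟨p, fun hpq : p = q => hqc (hpq ▸ hpc), Pqa, Pqb, Ppq, Ppc, hPqa, hPqb, hPpq, hPpc, ?_,
    out_q_pq hPqa, out_q_pc hPqa, out_q_pq hPqb, out_q_pc hPqb, ?_⟩
  · exact intDisjoint_of_forall_mem_eq hPqa.isEndpoint_head hPqb.isEndpoint_head fun w h₁ h₂ =>
      hlow w (hPqa.reaches_of_mem h₁).1 (hPqa.reaches_of_mem h₁).2 (hPqb.reaches_of_mem h₂).2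
  · exact intDisjoint_of_forall_mem_eq hPpq.isEndpoint_head hPpc.isEndpoint_head fun w h₁ h₂ =>
      hplow w (hPpq.reaches_of_mem h₁).1 ⟨(hPpq.reaches_of_mem h₁).2, (hPpc.reaches_of_mem h₂).2⟩

end Digraph

namespace PhyloNetwork

variable {V L : Type} (N : PhyloNetwork V L)

lemma outdeg_le_two (v : V) : outdeg N.arcs v ≤ 2 := by
  rcases N.vertex_type v with h | h | h | h <;> linarith [h.2]

lemma reaches_of_isRoot {r : V} (hr : IsRoot N.arcs r) (v : V) : Reaches N.arcs r v := by
  have := N.vfin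
  obtain ⟨u, huv, hhigh⟩ := N.acyclic.exists_highest (P := (Reaches N.arcs · v)) ⟨v, .refl⟩
  have hu : indeg N.arcs u = 0 := by
    refine (Set.ncard_eq_zero).2 (Set.eq_empty_of_forall_notMem fun w hw => ?_)
    obtain rfl := hhigh w (.single hw) (.head hw huv)
    exact N.acyclic w w hw .refl
  have hu_root : IsRoot N.arcs u := by
    rcases N.vertex_type u with h | h | h | h <;> simp_all [IsSplit, IsRetic, IsLeafV]
  exact N.root_unique r u hr hu_root ▸ huv

theorem exists_hasEmbedding {a b c : V} (ha : IsLeafV N.arcs a) (hb : IsLeafV N.arcs b)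
    (hc : IsLeafV N.arcs c) (hab : a ≠ b) (hac : a ≠ c) :
    (∃ p q, HasEmbedding N.arcs p q a b c) ∨ (∃ p q, HasEmbedding N.arcs p q a c b) ∨
      (∃ p q, HasEmbedding N.arcs p q b c a) := by
  have := N.vfin
  obtain ⟨r, hr⟩ := N.root_ex
  have hanc (q z : V) : ∃ r, Reaches N.arcs r q ∧ Reaches N.arcs r z :=
    ⟨r, N.reaches_of_isRoot hr q, N.reaches_of_isRoot hr z⟩
  obtain ⟨q, hq, hlow⟩ := N.acyclic.exists_lowest (P := ReachesTwoOf N.arcs a b c)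
    ⟨r, Or.inl ⟨N.reaches_of_isRoot hr a, N.reaches_of_isRoot hr b⟩⟩
  have hne {x y : V} (hx : IsLeafV N.arcs x) (hy : Reaches N.arcs q y) (hxy : x ≠ y) : q ≠ x := by
    rintro rfl
    exact hxy (eq_of_reaches_of_outdeg_eq_zero hx.2 hy).symm
  have hnot3 (hqa : Reaches N.arcs q a) (hqb : Reaches N.arcs q b) : ¬ Reaches N.arcs q c := by
    intro hqc
    obtain ⟨u, hqu, hu⟩ := exists_child_reachesTwoOf (N.outdeg_le_two q) hqa hqb hqc
      (hne ha hqb hab) (hne hb hqa hab.symm) (hne hc hqa hac.symm)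
    obtain rfl := hlow u (.single hqu) hu
    exact N.acyclic u u hqu .refl
  rcases hq with ⟨hqa, hqb⟩ | ⟨hqa, hqc⟩ | ⟨hqb, hqc⟩
  · obtain ⟨p, hp⟩ := N.acyclic.exists_hasEmbedding hqa hqb (hnot3 hqa hqb)
      (fun w hqw hwa hwb => hlow w hqw (Or.inl ⟨hwa, hwb⟩)) (hanc q c)
    exact Or.inl ⟨p, q, hp⟩
  · obtain ⟨p, hp⟩ := N.acyclic.exists_hasEmbedding hqa hqc (fun hqb => hnot3 hqa hqb hqc)
      (fun w hqw hwa hwc => hlow w hqw (Or.inr (Or.inl ⟨hwa, hwc⟩))) (hanc q b)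
    exact Or.inr (Or.inl ⟨p, q, hp⟩)
  · obtain ⟨p, hp⟩ := N.acyclic.exists_hasEmbedding hqb hqc (fun hqa => hnot3 hqa hqb hqc)
      (fun w hqw hwb hwc => hlow w hqw (Or.inr (Or.inr ⟨hwb, hwc⟩))) (hanc q a)
    exact Or.inr (Or.inr ⟨p, q, hp⟩)

theorem consistentT_or {x y z : L} (hx : x ∈ leafSet N) (hy : y ∈ leafSet N)
    (hz : z ∈ leafSet N) (hxy : x ≠ y) (hxz : x ≠ z) (hyz : y ≠ z) :
    ConsistentT N x y z ∨ ConsistentT N x z y ∨ ConsistentT N y z x := by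
  obtain ⟨a, ha, rfl⟩ := hx
  obtain ⟨b, hb, rfl⟩ := hy
  obtain ⟨c, hc, rfl⟩ := hz
  have hab : a ≠ b := ne_of_apply_ne N.lab hxy
  have hac : a ≠ c := ne_of_apply_ne N.lab hxz
  have hbc : b ≠ c := ne_of_apply_ne N.lab hyz
  rcases N.exists_hasEmbedding ha hb hc hab hac with ⟨p, q, h⟩ | ⟨p, q, h⟩ | ⟨p, q, h⟩
  · exact Or.inl ⟨a, b, c, ha, hb, hc, rfl, rfl, rfl, hab, hac, hbc, p, q, h⟩
  · exact Or.inr (Or.inl ⟨a, c, b, ha, hc, hb, rfl, rfl, rfl, hac, hab, hbc.symm, p, q, h⟩)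
  · exact Or.inr (Or.inr ⟨b, c, a, hb, hc, ha, rfl, rfl, rfl, hbc, hab.symm, hac.symm, p, q, h⟩)

lemma tripletLeaves_TN_subset : tripletLeaves (TN N) ⊆ leafSet N := by
  rintro x ⟨⟨_, _, _⟩, ⟨a, b, c, ha, hb, hc, rfl, rfl, rfl, -⟩, rfl | rfl | rfl⟩
  exacts [⟨a, ha, rfl⟩, ⟨b, hb, rfl⟩, ⟨c, hc, rfl⟩]

theorem denseT_TN : DenseT (TN N) := fun _ hx _ hy _ hz =>
  N.consistentT_or (N.tripletLeaves_TN_subset hx) (N.tripletLeaves_TN_subset hy)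
    (N.tripletLeaves_TN_subset hz)

end PhyloNetwork

/-- For every phylogenetic network `N` and every three distinct
leaves `x, y, z`, at least one of `xy|z`, `xz|y`, `yz|x` is consistent with `N`;
consequently `T(N)` is dense, and every reflective triplet set is dense. -/
theorem network_triplets_dense (V L : Type) (N : PhyloNetwork V L) :
    (∀ x y z : L, x ∈ leafSet N → y ∈ leafSet N → z ∈ leafSet N →
      x ≠ y → x ≠ z → y ≠ z →
      ConsistentT N x y z ∨ ConsistentT N x z y ∨ ConsistentT N y z x) ∧
    DenseT (TN N) ∧
    (∀ (L' : Type) (T : Set (L' × L' × L')),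
      (∃ (V' : Type) (N' : PhyloNetwork V' L'), Reflects N' T) → DenseT T) := by
  refine ⟨fun _ _ _ => N.consistentT_or, N.denseT_TN, ?_⟩
  rintro L' T ⟨V', N', rfl⟩
  exact N'.denseT_TN

end Phylo
end

section
/- Let T be a dense triplet set with |L(T)| = n ≥ 2. Then T has at most 2(n−1) nontrivial SN-sets. -/
/-!
Common definitions for formalizing "Constructing the Simplest Possible
Phylogenetic Network from Triplets" (van Iersel, Kelk).

A directed graph on a vertex type `V` is given by its arc set `A : Set (V × V)`.
-/

namespace Phylo

variable {V L : Type}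

/-!
Two SN-sets of a dense triplet set that are neither nested nor disjoint would give three
leaves on which no triplet can lie, so the SN-sets form a laminar family.  A laminar family of
nonempty subsets of an `n`-set has at most `2n - 1` members: a maximal member `S` other than
the whole set splits it into the members inside `S`, those inside the complement of `S`, and
the whole set, and induction applies to both halves.  The whole leaf set accounts for one of
the `2n - 1`.
-/

def IsLaminar {α : Type*} (F : Set (Set α)) : Prop :=
  ∀ A ∈ F, ∀ B ∈ F, A ⊆ B ∨ B ⊆ A ∨ Disjoint A B

namespace IsLaminar

variable {α : Type*} {F G : Set (Set α)} {U S : Set α}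

theorem mono (hF : IsLaminar F) (hG : G ⊆ F) : IsLaminar G :=
  fun A hA B hB => hF A (hG hA) B (hG hB)

theorem insert_of_forall_subset (hF : IsLaminar F) (hU : ∀ A ∈ F, A ⊆ U) :
    IsLaminar (insert U F) := by
  rintro A (rfl | hA) B (rfl | hB)
  · exact Or.inl le_rfl
  · exact Or.inr (Or.inl (hU B hB))
  · exact Or.inl (hU A hA)
  · exact hF A hA B hB

theorem subset_union_of_maximal (hF : IsLaminar F) (hsub : ∀ A ∈ F, A ⊆ U)
    (hS : Maximal (· ∈ F \ {U}) S) :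
    F ⊆ {A ∈ F | A ⊆ S} ∪ insert U {A ∈ F | A ⊆ U \ S} := by
  intro A hA
  by_cases hAS : A ⊆ S
  · exact Or.inl ⟨hA, hAS⟩
  by_cases hAU : A = U
  · exact Or.inr (Or.inl hAU)
  refine Or.inr (Or.inr ⟨hA, Set.subset_sdiff.mpr ⟨hsub A hA, ?_⟩⟩)
  rcases hF A hA S hS.prop.1 with hAS' | hSA | hdisj
  · exact absurd hAS' hAS
  · exact absurd (hS.2 ⟨hA, hAU⟩ hSA) hAS
  · exact hdisj

theorem ncard_le (hF : IsLaminar F) (hU : U.Finite) (hne : ∀ A ∈ F, A.Nonempty)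
    (hsub : ∀ A ∈ F, A ⊆ U) : F.ncard ≤ 2 * U.ncard - 1 := by
  induction h : U.ncard using Nat.strong_induction_on generalizing U F with
  | _ n ih =>
  subst h
  have hFfin : F.Finite := hU.finite_subsets.subset hsub
  by_cases hFU : F ⊆ {U}
  · rcases F.eq_empty_or_nonempty with rfl | ⟨A, hA⟩
    · simp
    have hUpos : 0 < U.ncard := (Set.ncard_pos hU).mpr ((hne A hA).mono (hsub A hA))
    have := Set.ncard_le_ncard hFU (Set.finite_singleton U)
    rw [Set.ncard_singleton] at this
    omega
  obtain ⟨S, hS⟩ :=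
    (hFfin.sdiff (t := {U})).exists_maximal (by simpa [Set.sdiff_nonempty] using hFU)
  have hSU : S ⊂ U := (hsub S hS.prop.1).ssubset_of_ne hS.prop.2
  have hSpos : 0 < S.ncard := (Set.ncard_pos (hU.subset hSU.1)).mpr (hne S hS.prop.1)
  have hSlt : S.ncard < U.ncard := Set.ncard_lt_ncard hSU hU
  have hcompl : (U \ S).ncard = U.ncard - S.ncard := Set.ncard_sdiff hSU.1 (hU.subset hSU.1)
  have hinside : {A ∈ F | A ⊆ S}.ncard ≤ 2 * S.ncard - 1 :=
    ih _ hSlt (hF.mono fun _ hA => hA.1) (hU.subset hSU.1) (fun A hA => hne A hA.1)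
      (fun _ hA => hA.2) rfl
  have houtside : {A ∈ F | A ⊆ U \ S}.ncard ≤ 2 * (U \ S).ncard - 1 :=
    ih _ (by omega) (hF.mono fun _ hA => hA.1) hU.sdiff (fun A hA => hne A hA.1)
      (fun _ hA => hA.2) rfl
  calc F.ncard ≤ ({A ∈ F | A ⊆ S} ∪ insert U {A ∈ F | A ⊆ U \ S}).ncard :=
        Set.ncard_le_ncard (hF.subset_union_of_maximal hsub hS)
          ((hFfin.subset fun _ hA => hA.1).union ((hFfin.subset fun _ hA => hA.1).insert U))
    _ ≤ {A ∈ F | A ⊆ S}.ncard + ({A ∈ F | A ⊆ U \ S}.ncard + 1) :=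
        (Set.ncard_union_le _ _).trans (Nat.add_le_add_left (Set.ncard_insert_le _ _) _)
    _ ≤ 2 * U.ncard - 1 := by omega

theorem ncard_le_of_ssubset (hF : IsLaminar F) (hU : U.Finite) (hne : ∀ A ∈ F, A.Nonempty)
    (hssub : ∀ A ∈ F, A ⊂ U) : F.ncard ≤ 2 * (U.ncard - 1) := by
  rcases F.eq_empty_or_nonempty with rfl | ⟨A, hA⟩
  · simp
  have hUpos : 0 < U.ncard := (Set.ncard_pos hU).mpr ((hne A hA).mono (hssub A hA).1)
  have hUF : U ∉ F := fun hU' => (hssub U hU').ne rfl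
  have hins := (hF.insert_of_forall_subset fun A hA => (hssub A hA).1).ncard_le hU
    (by rintro B (rfl | hB); exacts [(hne A hA).mono (hssub A hA).1, hne B hB])
    (by rintro B (rfl | hB); exacts [le_rfl, (hssub B hB).1])
  rw [Set.ncard_insert_of_notMem hUF (hU.finite_subsets.subset fun B hB => (hssub B hB).1)]
    at hins
  omega

end IsLaminar

theorem isLaminar_setOf_SNSet {L : Type} {T : Set (L × L × L)} (hT : IsTripletSet T)
    (hdense : DenseT T) : IsLaminar {S | SNSet T S} := by
  intro S₁ h₁ S₂ h₂
  by_contra! h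
  obtain ⟨h₁₂, h₂₁, hmeet⟩ := h
  obtain ⟨a, ha₁, ha₂⟩ := Set.not_subset.mp h₁₂
  obtain ⟨b, hb₂, hb₁⟩ := Set.not_subset.mp h₂₁
  obtain ⟨c, hc₁, hc₂⟩ := Set.not_disjoint_iff.mp hmeet
  rcases hdense a (h₁.1 ha₁) b (h₂.1 hb₂) c (h₁.1 hc₁) (ne_of_mem_of_not_mem ha₁ hb₁)
      (ne_of_mem_of_not_mem hc₂ ha₂).symm (ne_of_mem_of_not_mem hc₁ hb₁).symm
    with habc | hacb | hbca
  · exact h₁.2 ⟨a, b, c, habc, ha₁, hc₁, hb₁⟩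
  · exact h₂.2 ⟨c, a, b, (hT _ hacb).1, hc₂, hb₂, ha₂⟩
  · exact h₁.2 ⟨c, b, a, (hT _ hbca).1, hc₁, ha₁, hb₁⟩

theorem count_nontrivial_SNsets_general (L : Type) (T : Set (L × L × L))
    (hT : IsTripletSet T) (hfin : (tripletLeaves T).Finite) (hdense : DenseT T)
    (n : ℕ) (hn : (tripletLeaves T).ncard = n) :
    {S : Set L | S.Nonempty ∧ SNSet T S ∧ S ≠ tripletLeaves T}.ncard ≤ 2 * (n - 1) := by
  subst hn
  exact ((isLaminar_setOf_SNSet hT hdense).mono fun S hS => hS.2.1).ncard_le_of_ssubset hfin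
    (fun S hS => hS.1) fun S hS => hS.2.1.1.ssubset_of_ne hS.2.2

/-- A dense triplet set on `n ≥ 2` leaves has at most `2(n-1)`
nontrivial SN-sets. -/
theorem count_nontrivial_SNsets (L : Type) (T : Set (L × L × L))
    (hT : IsTripletSet T) (hfin : (tripletLeaves T).Finite) (hdense : DenseT T)
    (n : ℕ) (hn : (tripletLeaves T).ncard = n) (h2 : 2 ≤ n) :
    {S : Set L | S.Nonempty ∧ SNSet T S ∧ S ≠ tripletLeaves T}.ncard ≤ 2 * (n - 1) :=
  count_nontrivial_SNsets_general L T hT hfin hdense n hn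

end Phylo
end
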